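/- arXiv:2410.16709 — 2 statements merged into one kernel-verified Lean document; each statement's English description precedes it below -/
import Mathlib

section
/- Let T>0 and let f:ℝ^N×ℝ→ℝ^N be measurable, satisfy a Lipschitz condition with respect to x (uniformly in t), be locally essentially bounded, and be T-periodic in time: f(x,t+T)=f(x,t) for a.e. (x,t). For m∈ℕ define f_m(x,t):=f(x,mt) and the time average f̄(x):=(1/T)∫₀ᵀ f(x,t)dt. Then for every initial value ξ in a bounded closed set D⊂ℝ^N, the solutions x_m(t)=S_{f_m}(t)ξ converge to x̄(t)=S_{f̄}(t)ξ uniformly on [0,T] as m→∞. -/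
/-!
Write `x_m - x̄` as `∫₀ᵗ (f(x_m, ms) - f(x̄, ms)) ds + ∫₀ᵗ (f(x̄, ms) - f̄(x̄)) ds`. The first
term is at most `K ∫₀ᵗ ‖x_m - x̄‖`, so by Gronwall it suffices that the second term tends to `0`
uniformly in `t`. On an interval short enough that `x̄` is almost constant, equal to `z` say, the
integrand is close to `f(z, ms) - f̄(z)`, which has period `T / m` and mean zero; its primitive is
therefore periodic, hence bounded, and the integral is `O(1/m)`. Summing over a fixed partition
of `[0, t]` gives the claim.
-/

open MeasureTheory Set intervalIntegral Bornology Filter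
open scoped ENNReal NNReal

noncomputable section

/-- `x` is a solution on `[0,T]` of the ODE `x' = f(x,t)` with initial value `ξ`,
in integral form: `x(t) = ξ + ∫₀ᵗ f(x(s),s) ds`, `x ∈ C⁰([0,T];ℝᴺ)`. -/
def IsSol {N : ℕ} (f : EuclideanSpace ℝ (Fin N) → ℝ → EuclideanSpace ℝ (Fin N)) (T : ℝ)
    (ξ : EuclideanSpace ℝ (Fin N)) (x : ℝ → EuclideanSpace ℝ (Fin N)) : Prop :=
  ContinuousOn x (Set.Icc 0 T) ∧
    ∀ t ∈ Set.Icc (0 : ℝ) T, x t = ξ + ∫ s in (0 : ℝ)..t, f (x s) s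

open Topology

theorem le_mul_exp_of_le_add_mul_integral {φ : ℝ → ℝ} {a K T : ℝ}
    (hφ : ContinuousOn φ (Icc 0 T)) (hK : 0 ≤ K)
    (h : ∀ t ∈ Icc 0 T, φ t ≤ a + K * ∫ s in 0..t, φ s) :
    ∀ t ∈ Icc 0 T, φ t ≤ a * Real.exp (K * t) := by
  set ψ : ℝ → ℝ := fun u => a + K * ∫ s in 0..u, φ s
  have hψ : ∀ u ∈ Icc 0 T, HasDerivWithinAt ψ (K * φ u) (Icc 0 T) u := fun u hu => by
    have := Fact.mk hu -- the `FTCFilter` instance for `Icc 0 T` at `u`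
    refine (HasDerivWithinAt.const_mul K ?_).const_add a
    exact integral_hasDerivWithinAt_right
      ((hφ.mono (Icc_subset_Icc le_rfl hu.2)).intervalIntegrable_of_Icc hu.1)
      (hφ.stronglyMeasurableAtFilter_nhdsWithin measurableSet_Icc u) (hφ.continuousWithinAt hu)
  have hψ_le : ∀ t ∈ Icc 0 T, ψ t ≤ gronwallBound a K 0 (t - 0) := by
    refine le_gronwallBound_of_liminf_deriv_right_le (f' := fun u => K * φ u)
      (fun u hu => (hψ u hu).continuousWithinAt) (fun u hu r hr => ?_) (by simp [ψ]) fun u hu => ?_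
    · have hmem : Icc 0 T ∈ 𝓝[≥] u :=
        mem_of_superset (Icc_mem_nhdsGE hu.2) (Icc_subset_Icc_left hu.1)
      exact ((hψ u (Ico_subset_Icc_self hu)).mono_of_mem_nhdsWithin hmem).liminf_right_slope_le hr
    · simpa using mul_le_mul_of_nonneg_left (h u (Ico_subset_Icc_self hu)) hK
  intro t ht
  simpa [gronwallBound_ε0] using (h t ht).trans (hψ_le t ht)

section IntervalIntegral

variable {F : Type*} [NormedAddCommGroup F] [NormedSpace ℝ F] {h : ℝ → F} {T : ℝ}

theorem periodic_integral_of_ae_periodic (hI : ∀ a b, IntervalIntegrable h volume a b)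
    (hper : ∀ᵐ t, h (t + T) = h t) (hmean : ∫ s in 0..T, h s = 0) :
    Function.Periodic (fun t => ∫ s in 0..t, h s) T := by
  intro t
  have hshift : ∫ s in T..t + T, h s = ∫ s in 0..t, h s := by
    have := integral_comp_add_right (a := 0) (b := t) h T
    rw [zero_add] at this
    rw [← this]
    exact integral_congr_ae (hper.mono fun s hs _ => hs)
  simp only
  rw [← integral_add_adjacent_intervals (hI 0 T) (hI T (t + T)), hmean, zero_add, hshift]

theorem norm_integral_le_of_ae_periodic {C : ℝ} (hT : 0 < T)
    (hI : ∀ a b, IntervalIntegrable h volume a b) (hper : ∀ᵐ t, h (t + T) = h t)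
    (hmean : ∫ s in 0..T, h s = 0) (hC : ∀ᵐ t, ‖h t‖ ≤ C) (a b : ℝ) :
    ‖∫ s in a..b, h s‖ ≤ 2 * (C * T) := by
  have hprim : ∀ t, ‖∫ s in 0..t, h s‖ ≤ C * T := fun t => by
    obtain ⟨u, hu, hut⟩ := (periodic_integral_of_ae_periodic hI hper hmean).exists_mem_Ico₀ hT t
    obtain ⟨t₀, ht₀⟩ := hC.exists
    have hC0 : 0 ≤ C := (norm_nonneg _).trans ht₀
    calc ‖∫ s in 0..t, h s‖ = ‖∫ s in 0..u, h s‖ := by rw [hut]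
      _ ≤ C * |u - 0| := norm_integral_le_of_norm_le_const_ae (hC.mono fun s hs _ => hs)
      _ ≤ C * T := by rw [sub_zero, abs_of_nonneg hu.1]; gcongr; exact hu.2.le
  rw [← integral_interval_sub_left (hI 0 b) (hI 0 a)]
  linarith [norm_sub_le (∫ s in 0..b, h s) (∫ s in 0..a, h s), hprim a, hprim b]

theorem norm_integral_le_of_uniform_partition {g : ℝ → F} {t B : ℝ} {n : ℕ} (ht : 0 ≤ t)
    (hn : n ≠ 0) (hg : IntervalIntegrable g volume 0 t)
    (h : ∀ a, 0 ≤ a → a + t / n ≤ t → ‖∫ s in a..a + t / n, g s‖ ≤ B) :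
    ‖∫ s in 0..t, g s‖ ≤ n * B := by
  set u : ℕ → ℝ := fun k => k * (t / n)
  have hu_succ : ∀ k, u (k + 1) = u k + t / n := fun k => by simp only [u]; push_cast; ring
  have hu_nonneg : ∀ k, 0 ≤ u k := fun k => by positivity
  have hu_le : ∀ k ≤ n, u k ≤ t := fun k hk => by
    calc u k = k * (t / n) := rfl
      _ ≤ n * (t / n) := by gcongr
      _ = t := by field_simp
  have hpieces : ∀ k < n, IntervalIntegrable g volume (u k) (u (k + 1)) := fun k hk =>
    hg.mono_set <| uIcc_subset_uIcc (by rw [uIcc_of_le ht]; exact ⟨hu_nonneg k, hu_le k hk.le⟩)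
      (by rw [uIcc_of_le ht]; exact ⟨hu_nonneg _, hu_le _ hk⟩)
  have hsum := sum_integral_adjacent_intervals hpieces
  rw [show u 0 = 0 by simp [u], show u n = t by simp only [u]; field_simp] at hsum
  rw [← hsum]
  calc ‖∑ k ∈ Finset.range n, ∫ s in u k..u (k + 1), g s‖
      ≤ ∑ _k ∈ Finset.range n, B := (norm_sum_le _ _).trans <| Finset.sum_le_sum fun k hk => by
        rw [hu_succ]
        exact h _ (hu_nonneg k) (hu_succ k ▸ hu_le _ (Finset.mem_range.1 hk))
    _ = n * B := by simp

end IntervalIntegral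

section Growth

variable {E F : Type*} [NormedAddCommGroup E] [NormedAddCommGroup F] {f : E → ℝ → F} {K : ℝ≥0}
  {C : ℝ}

theorem ae_forall_norm_le_of_lipschitzWith (hLip : ∀ t, LipschitzWith K (f · t))
    (hC : ∀ᵐ t, ‖f 0 t‖ ≤ C) : ∀ᵐ t, ∀ z, ‖f z t‖ ≤ C + K * ‖z‖ := by
  filter_upwards [hC] with t ht z
  have := (hLip t).norm_sub_le z 0
  rw [sub_zero] at this
  linarith [norm_le_norm_sub_add (f z t) (f 0 t)]

variable [MeasurableSpace E] [BorelSpace E] [MeasurableSpace F] [OpensMeasurableSpace F]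
  [SecondCountableTopology F]

theorem intervalIntegrable_comp_mul (hmeas : Measurable (Function.uncurry f))
    (hgrowth : ∀ᵐ t, ∀ z, ‖f z t‖ ≤ C + K * ‖z‖) {y : ℝ → E} {a b c : ℝ}
    (hy : ContinuousOn y (uIcc a b)) (hc : c ≠ 0) :
    IntervalIntegrable (fun s => f (y s) (c * s)) volume a b := by
  obtain ⟨R, hR⟩ := (isCompact_uIcc.image_of_continuousOn hy).isBounded.exists_norm_le
  have hy_meas : AEMeasurable y (volume.restrict (uIoc a b)) :=
    (hy.mono uIoc_subset_uIcc).aemeasurable measurableSet_uIoc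
  refine IntervalIntegrable.mono_fun' (g := fun _ => C + K * R) intervalIntegrable_const
    (hmeas.comp_aemeasurable
      (hy_meas.prodMk (measurable_const_mul c).aemeasurable)).aestronglyMeasurable ?_
  filter_upwards [ae_restrict_of_ae ((Measure.quasiMeasurePreserving_smul volume hc).ae hgrowth),
    ae_restrict_mem measurableSet_uIoc] with s hs hmem
  have := hR _ (mem_image_of_mem y (uIoc_subset_uIcc hmem))
  exact (hs (y s)).trans (by gcongr)

theorem intervalIntegrable_slice (hmeas : Measurable (Function.uncurry f))
    (hgrowth : ∀ᵐ t, ∀ z, ‖f z t‖ ≤ C + K * ‖z‖) (z : E) (a b : ℝ) :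
    IntervalIntegrable (f z) volume a b := by
  simpa using intervalIntegrable_comp_mul hmeas hgrowth (y := fun _ => z) (a := a) (b := b)
    continuousOn_const one_ne_zero

end Growth

section TimeAverage

variable {E F : Type*} [NormedAddCommGroup E] [NormedAddCommGroup F] [NormedSpace ℝ F]
  {f : E → ℝ → F} {K : ℝ≥0} {C T : ℝ}

def timeAverage (T : ℝ) (f : E → ℝ → F) (z : E) : F :=
  (1 / T) • ∫ s in 0..T, f z s

theorem norm_timeAverage_le (hT : 0 < T) (hgrowth : ∀ᵐ t, ∀ z, ‖f z t‖ ≤ C + K * ‖z‖) (z : E) :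
    ‖timeAverage T f z‖ ≤ C + K * ‖z‖ := by
  have hint : ‖∫ s in 0..T, f z s‖ ≤ (C + K * ‖z‖) * |T - 0| :=
    norm_integral_le_of_norm_le_const_ae (hgrowth.mono fun s hs _ => hs z)
  rw [timeAverage, norm_smul, Real.norm_of_nonneg (by positivity)]
  rw [sub_zero, abs_of_pos hT] at hint
  calc 1 / T * ‖∫ s in 0..T, f z s‖ ≤ 1 / T * ((C + K * ‖z‖) * T) := by gcongr
    _ = C + K * ‖z‖ := by field_simp

variable [MeasurableSpace E] [BorelSpace E] [MeasurableSpace F] [OpensMeasurableSpace F]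
  [SecondCountableTopology F]

theorem lipschitzWith_timeAverage (hT : 0 < T) (hmeas : Measurable (Function.uncurry f))
    (hLip : ∀ t, LipschitzWith K (f · t)) (hgrowth : ∀ᵐ t, ∀ z, ‖f z t‖ ≤ C + K * ‖z‖) :
    LipschitzWith K (timeAverage T f) := by
  refine LipschitzWith.of_dist_le_mul fun z z' => ?_
  have hI := intervalIntegrable_slice hmeas hgrowth
  have hint : ‖∫ s in 0..T, (f z s - f z' s)‖ ≤ K * dist z z' * |T - 0| :=
    norm_integral_le_of_norm_le_const fun s _ => by
      rw [← dist_eq_norm]; exact (hLip s).dist_le_mul z z'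
  rw [sub_zero, abs_of_pos hT] at hint
  rw [dist_eq_norm, timeAverage, timeAverage, ← smul_sub, ← integral_sub (hI z 0 T) (hI z' 0 T),
    norm_smul, Real.norm_of_nonneg (by positivity)]
  calc 1 / T * ‖∫ s in 0..T, (f z s - f z' s)‖ ≤ 1 / T * (K * dist z z' * T) := by gcongr
    _ = K * dist z z' := by field_simp

variable [CompleteSpace F]

theorem integral_sub_timeAverage_eq_zero (hT : 0 < T) (hmeas : Measurable (Function.uncurry f))
    (hgrowth : ∀ᵐ t, ∀ z, ‖f z t‖ ≤ C + K * ‖z‖) (z : E) :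
    ∫ s in 0..T, (f z s - timeAverage T f z) = 0 := by
  rw [integral_sub (intervalIntegrable_slice hmeas hgrowth z 0 T) intervalIntegrable_const,
    intervalIntegral.integral_const, sub_zero, timeAverage, smul_smul, mul_one_div_cancel hT.ne',
    one_smul, sub_self]

theorem norm_integral_comp_mul_sub_timeAverage_le (hT : 0 < T)
    (hmeas : Measurable (Function.uncurry f)) (hgrowth : ∀ᵐ t, ∀ z, ‖f z t‖ ≤ C + K * ‖z‖)
    (hper : ∀ᵐ t, ∀ z, f z (t + T) = f z t) {c : ℝ} (hc : 0 < c) (z : E) (a b : ℝ) :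
    ‖∫ s in a..b, (f z (c * s) - timeAverage T f z)‖ ≤ 4 * (C + K * ‖z‖) * T / c := by
  have hbound : ∀ᵐ t, ‖f z t - timeAverage T f z‖ ≤ 2 * (C + K * ‖z‖) := by
    filter_upwards [hgrowth] with t ht
    linarith [norm_sub_le (f z t) (timeAverage T f z), ht z, norm_timeAverage_le hT hgrowth z]
  have hosc := norm_integral_le_of_ae_periodic hT
    (fun a b => (intervalIntegrable_slice hmeas hgrowth z a b).sub intervalIntegrable_const)
    (hper.mono fun t ht => by rw [ht z]) (integral_sub_timeAverage_eq_zero hT hmeas hgrowth z)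
    hbound (c * a) (c * b)
  rw [intervalIntegral.integral_comp_mul_left (fun τ => f z τ - timeAverage T f z) hc.ne',
    norm_smul, norm_inv, Real.norm_of_nonneg hc.le, inv_mul_eq_div]
  gcongr
  linarith

theorem norm_integral_comp_mul_sub_timeAverage_le_of_near (hT : 0 < T)
    (hmeas : Measurable (Function.uncurry f)) (hLip : ∀ t, LipschitzWith K (f · t))
    (hgrowth : ∀ᵐ t, ∀ z, ‖f z t‖ ≤ C + K * ‖z‖) (hper : ∀ᵐ t, ∀ z, f z (t + T) = f z t)
    {y : ℝ → E} {a b c ε : ℝ} (hc : 0 < c) (hy : ContinuousOn y (uIcc a b))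
    (hnear : ∀ s ∈ uIcc a b, ‖y s - y a‖ ≤ ε) :
    ‖∫ s in a..b, (f (y s) (c * s) - timeAverage T f (y s))‖
      ≤ 2 * K * ε * |b - a| + 4 * (C + K * ‖y a‖) * T / c := by
  have hLipAvg := lipschitzWith_timeAverage hT hmeas hLip hgrowth
  have hIy : IntervalIntegrable (fun s => f (y s) (c * s) - timeAverage T f (y s)) volume a b :=
    (intervalIntegrable_comp_mul hmeas hgrowth hy hc.ne').sub
      (hLipAvg.continuous.comp_continuousOn hy).intervalIntegrable
  have hIa : IntervalIntegrable (fun s => f (y a) (c * s) - timeAverage T f (y a)) volume a b :=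
    (intervalIntegrable_comp_mul hmeas hgrowth (y := fun _ => y a) continuousOn_const
      hc.ne').sub intervalIntegrable_const
  have hwobble : ‖∫ s in a..b, ((f (y s) (c * s) - timeAverage T f (y s))
      - (f (y a) (c * s) - timeAverage T f (y a)))‖ ≤ 2 * K * ε * |b - a| :=
    norm_integral_le_of_norm_le_const fun s hs => by
      have hs' := mul_le_mul_of_nonneg_left (hnear s (uIoc_subset_uIcc hs)) K.coe_nonneg
      calc _ = ‖(f (y s) (c * s) - f (y a) (c * s))
              - (timeAverage T f (y s) - timeAverage T f (y a))‖ := by congr 1; abel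
        _ ≤ K * ‖y s - y a‖ + K * ‖y s - y a‖ :=
            norm_sub_le_of_le ((hLip _).norm_sub_le _ _) (hLipAvg.norm_sub_le _ _)
        _ ≤ 2 * K * ε := by linarith
  rw [← sub_add_cancel (∫ s in a..b, (f (y s) (c * s) - timeAverage T f (y s)))
    (∫ s in a..b, (f (y a) (c * s) - timeAverage T f (y a))), ← integral_sub hIy hIa]
  exact norm_add_le_of_le hwobble
    (norm_integral_comp_mul_sub_timeAverage_le hT hmeas hgrowth hper hc (y a) a b)

theorem norm_integral_comp_mul_sub_timeAverage_le_of_uniform_partition (hT : 0 < T)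
    (hmeas : Measurable (Function.uncurry f)) (hLip : ∀ t, LipschitzWith K (f · t))
    (hgrowth : ∀ᵐ t, ∀ z, ‖f z t‖ ≤ C + K * ‖z‖) (hper : ∀ᵐ t, ∀ z, f z (t + T) = f z t)
    {y : ℝ → E} (hy : ContinuousOn y (Icc 0 T)) {R ε δ c t : ℝ} {n : ℕ}
    (hR : ∀ s ∈ Icc 0 T, ‖y s‖ ≤ R)
    (hyδ : ∀ s ∈ Icc 0 T, ∀ s' ∈ Icc 0 T, dist s s' < δ → dist (y s) (y s') < ε)
    (hn : n ≠ 0) (hTn : T / n < δ) (hc : 0 < c) (ht : t ∈ Icc 0 T) :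
    ‖∫ s in 0..t, (f (y s) (c * s) - timeAverage T f (y s))‖
      ≤ n * (2 * K * ε * (t / n) + 4 * (C + K * R) * T / c) := by
  have htn : 0 ≤ t / n := div_nonneg ht.1 n.cast_nonneg
  have hy₀ : ContinuousOn y (uIcc 0 t) := hy.mono (uIcc_subset_Icc ⟨le_rfl, hT.le⟩ ht)
  refine norm_integral_le_of_uniform_partition ht.1 hn ((intervalIntegrable_comp_mul hmeas
    hgrowth hy₀ hc.ne').sub ((lipschitzWith_timeAverage hT hmeas hLip hgrowth).continuous
      |>.comp_continuousOn hy₀).intervalIntegrable) fun a ha hat => ?_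
  have hsub : uIcc a (a + t / n) ⊆ Icc 0 T := by
    rw [uIcc_of_le (by linarith)]
    exact Icc_subset_Icc ha (hat.trans ht.2)
  have hnear : ∀ s ∈ uIcc a (a + t / n), ‖y s - y a‖ ≤ ε := fun s hs => by
    rw [← dist_eq_norm]
    refine (hyδ s (hsub hs) a (hsub left_mem_uIcc) ?_).le
    rw [uIcc_of_le (by linarith)] at hs
    have : t / n ≤ T / n := by gcongr; exact ht.2
    rw [Real.dist_eq, abs_of_nonneg (by linarith [hs.1])]
    linarith [hs.2]
  refine (norm_integral_comp_mul_sub_timeAverage_le_of_near hT hmeas hLip hgrowth hper hc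
    (hy.mono hsub) hnear).trans ?_
  rw [add_sub_cancel_left, abs_of_nonneg htn]
  have := hR a (hsub left_mem_uIcc)
  gcongr

theorem tendstoUniformlyOn_integral_comp_mul_sub_timeAverage (hT : 0 < T)
    (hmeas : Measurable (Function.uncurry f)) (hLip : ∀ t, LipschitzWith K (f · t))
    (hgrowth : ∀ᵐ t, ∀ z, ‖f z t‖ ≤ C + K * ‖z‖) (hper : ∀ᵐ t, ∀ z, f z (t + T) = f z t)
    {y : ℝ → E} (hy : ContinuousOn y (Icc 0 T)) :
    TendstoUniformlyOn (fun (m : ℕ) t => ∫ s in 0..t, (f (y s) (m * s) - timeAverage T f (y s)))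
      0 atTop (Icc 0 T) := by
  rw [Metric.tendstoUniformlyOn_iff]
  intro α hα
  obtain ⟨R, hR⟩ := (isCompact_Icc.image_of_continuousOn hy).isBounded.exists_norm_le
  set ε := α / (4 * (K * T + 1))
  have hε : ε * (4 * (K * T + 1)) = α := div_mul_cancel₀ _ (by positivity)
  obtain ⟨δ, hδ, hyδ⟩ := Metric.uniformContinuousOn_iff.1
    (isCompact_Icc.uniformContinuousOn_of_continuous hy) ε (by positivity)
  obtain ⟨n, hn⟩ := exists_nat_gt (T / δ)
  have hn0 : (0 : ℝ) < n := (div_pos hT hδ).trans hn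
  have hTn : T / n < δ := by rw [div_lt_iff₀ hn0]; rwa [div_lt_iff₀ hδ, mul_comm] at hn
  filter_upwards [(tendsto_const_div_atTop_nhds_zero_nat (n * (4 * (C + K * R) * T))).eventually
    (gt_mem_nhds (half_pos hα)), eventually_gt_atTop 0] with m hm hm0 t ht
  rw [Pi.zero_apply, dist_zero_left]
  have hKt : 2 * K * ε * t < α / 2 := by
    have : 2 * K * ε * t ≤ 2 * K * ε * T := by gcongr; exact ht.2
    have : 2 * K * ε * T = α / 2 - 2 * ε := by rw [← hε]; ring
    linarith [show 0 < ε by positivity]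
  calc _ ≤ n * (2 * K * ε * (t / n) + 4 * (C + K * R) * T / m) :=
        norm_integral_comp_mul_sub_timeAverage_le_of_uniform_partition hT hmeas hLip hgrowth hper
          hy (fun s hs => hR _ (mem_image_of_mem y hs)) hyδ (Nat.cast_pos.1 hn0).ne' hTn
          (Nat.cast_pos.2 hm0) ht
    _ = 2 * K * ε * t + n * (4 * (C + K * R) * T) / m := by field_simp
    _ < α := by linarith

end TimeAverage

theorem norm_sub_le_mul_exp_of_integral_eq {E : Type*} [NormedAddCommGroup E] [NormedSpace ℝ E]
    {F G : E → ℝ → E} {x y : ℝ → E} {ξ : E} {K : ℝ≥0} {T α : ℝ}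
    (hLip : ∀ t, LipschitzWith K (F · t))
    (hx : ContinuousOn x (Icc 0 T)) (hy : ContinuousOn y (Icc 0 T))
    (hxF : ∀ t ∈ Icc 0 T, x t = ξ + ∫ s in 0..t, F (x s) s)
    (hyG : ∀ t ∈ Icc 0 T, y t = ξ + ∫ s in 0..t, G (y s) s)
    (hFx : IntervalIntegrable (fun s => F (x s) s) volume 0 T)
    (hFy : IntervalIntegrable (fun s => F (y s) s) volume 0 T)
    (hGy : IntervalIntegrable (fun s => G (y s) s) volume 0 T)
    (hα : ∀ t ∈ Icc 0 T, ‖∫ s in 0..t, (F (y s) s - G (y s) s)‖ ≤ α) :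
    ∀ t ∈ Icc 0 T, ‖x t - y t‖ ≤ α * Real.exp (K * t) := by
  have hdist : ContinuousOn (fun s => ‖x s - y s‖) (Icc 0 T) :=
    continuous_norm.comp_continuousOn (hx.sub hy)
  refine le_mul_exp_of_le_add_mul_integral hdist K.coe_nonneg fun t ht => ?_
  have hsub : uIcc 0 t ⊆ uIcc 0 T := by
    rw [uIcc_of_le ht.1, uIcc_of_le (ht.1.trans ht.2)]
    exact Icc_subset_Icc_right ht.2
  have hsplit : x t - y t = (∫ s in 0..t, (F (x s) s - F (y s) s))
      + ∫ s in 0..t, (F (y s) s - G (y s) s) := by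
    rw [hxF t ht, hyG t ht, integral_sub (hFx.mono_set hsub) (hFy.mono_set hsub),
      integral_sub (hFy.mono_set hsub) (hGy.mono_set hsub)]
    abel
  have hLipInt : ‖∫ s in 0..t, (F (x s) s - F (y s) s)‖ ≤ K * ∫ s in 0..t, ‖x s - y s‖ := by
    rw [← intervalIntegral.integral_const_mul]
    refine norm_integral_le_of_norm_le ht.1 (ae_of_all _ fun s _ => (hLip s).norm_sub_le _ _) ?_
    have hK_dist : ContinuousOn (fun s => (K : ℝ) * ‖x s - y s‖) (uIcc 0 t) :=
      (continuousOn_const.mul hdist).mono (by rwa [uIcc_of_le (ht.1.trans ht.2)] at hsub)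
    exact hK_dist.intervalIntegrable
  rw [hsplit]
  linarith [norm_add_le (∫ s in 0..t, (F (x s) s - F (y s) s))
    (∫ s in 0..t, (F (y s) s - G (y s) s)), hα t ht]

theorem averaging_general {N : ℕ} (T : ℝ) (hT : 0 < T)
    (f : EuclideanSpace ℝ (Fin N) → ℝ → EuclideanSpace ℝ (Fin N))
    (hmeas : Measurable (Function.uncurry f))
    (K : ℝ≥0) (hLip : ∀ t : ℝ, LipschitzWith K (fun z => f z t))
    (hbd : ∀ z, ∃ C, ∀ᵐ t ∂(volume : Measure ℝ), ‖f z t‖ ≤ C)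
    (hper : ∀ᵐ t ∂(volume : Measure ℝ), ∀ z, f z (t + T) = f z t)
    (ξ : EuclideanSpace ℝ (Fin N))
    (xm : ℕ → ℝ → EuclideanSpace ℝ (Fin N))
    (hxm : ∀ m : ℕ, IsSol (fun z t => f z (m * t)) T ξ (xm m))
    (xb : ℝ → EuclideanSpace ℝ (Fin N))
    (hxb : IsSol (fun z _t => (1 / T) • ∫ s in (0 : ℝ)..T, f z s) T ξ xb) :
    TendstoUniformlyOn (fun m t => xm m t) xb atTop (Set.Icc 0 T) := by
  obtain ⟨C, hC⟩ := hbd 0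
  have hgrowth := ae_forall_norm_le_of_lipschitzWith hLip hC
  have hsmall := Metric.tendstoUniformlyOn_iff.1
    (tendstoUniformlyOn_integral_comp_mul_sub_timeAverage hT hmeas hLip hgrowth hper hxb.1)
  have hIcc : uIcc 0 T ⊆ Icc 0 T := (uIcc_of_le hT.le).subset
  rw [Metric.tendstoUniformlyOn_iff]
  intro ε hε
  filter_upwards [hsmall (ε / 2 / Real.exp (K * T)) (by positivity), eventually_ne_atTop 0]
    with m hm hm0 t ht
  have hI {x} (hx : ContinuousOn x (Icc 0 T)) :=
    intervalIntegrable_comp_mul hmeas hgrowth (hx.mono hIcc) (Nat.cast_ne_zero.2 hm0)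
  have hdev := norm_sub_le_mul_exp_of_integral_eq (F := fun z t => f z (m * t))
    (G := fun z _ => timeAverage T f z) (fun t => hLip (m * t)) (hxm m).1 hxb.1
    (hxm m).2 hxb.2 (hI (hxm m).1) (hI hxb.1)
    ((lipschitzWith_timeAverage hT hmeas hLip hgrowth).continuous.comp_continuousOn
      (hxb.1.mono hIcc)).intervalIntegrable
    (fun t ht => by simpa only [Pi.zero_apply, dist_zero_left] using (hm t ht).le) t ht
  rw [dist_comm, dist_eq_norm]
  calc ‖xm m t - xb t‖ ≤ ε / 2 / Real.exp (K * T) * Real.exp (K * t) := hdev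
    _ ≤ ε / 2 / Real.exp (K * T) * Real.exp (K * T) := by gcongr; exact ht.2
    _ < ε := by rw [div_mul_cancel₀ _ (Real.exp_pos _).ne']; linarith

/-- Averaging theorem of Piccinini–Stampacchia–Vidossich.
Let `f : ℝᴺ × ℝ → ℝᴺ` be measurable, Lipschitz in `x` uniformly in `t`, locally
essentially bounded in time, and `T`-periodic in time (for a.e. `t`). For `m ∈ ℕ` let
`f_m(x,t) := f(x,mt)` and `f̄(x) := (1/T)∫₀ᵀ f(x,t) dt`. Then for every initial value
`ξ` in a bounded closed set `D`, the solutions `x_m = S_{f_m}(·)ξ` converge to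
`x̄ = S_{f̄}(·)ξ` uniformly on `[0,T]` as `m → ∞`. -/
theorem averaging {N : ℕ} (T : ℝ) (hT : 0 < T)
    (f : EuclideanSpace ℝ (Fin N) → ℝ → EuclideanSpace ℝ (Fin N))
    (hmeas : Measurable (Function.uncurry f))
    (K : ℝ≥0) (hLip : ∀ t : ℝ, LipschitzWith K (fun z => f z t))
    (hbd : ∀ z, ∃ C, ∀ᵐ t ∂(volume : Measure ℝ), ‖f z t‖ ≤ C)
    (hper : ∀ᵐ t ∂(volume : Measure ℝ), ∀ z, f z (t + T) = f z t)
    (D : Set (EuclideanSpace ℝ (Fin N))) (hDb : IsBounded D) (hDc : IsClosed D)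
    (ξ : EuclideanSpace ℝ (Fin N)) (hξ : ξ ∈ D)
    (xm : ℕ → ℝ → EuclideanSpace ℝ (Fin N))
    (hxm : ∀ m : ℕ, IsSol (fun z t => f z (m * t)) T ξ (xm m))
    (xb : ℝ → EuclideanSpace ℝ (Fin N))
    (hxb : IsSol (fun z _t => (1 / T) • ∫ s in (0 : ℝ)..T, f z s) T ξ xb) :
    TendstoUniformlyOn (fun m t => xm m t) xb atTop (Set.Icc 0 T) :=
  averaging_general T hT f hmeas K hLip hbd hper ξ xm hxm xb hxb
end
end

section
/- Let N=1, D=[−1,1], and F:D→ℝ defined by F(ξ)=−ξ. Then for every continuous f:ℝ×[0,T]→ℝ with Lip(f)<∞, one has sup_{ξ∈D}|F(ξ) − S_f(T)ξ| ≥ 1. In particular, the map ξ↦−ξ cannot be approximated in the sup-norm by any ODENet. -/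
open MeasureTheory Set intervalIntegral
open scoped NNReal

/-! The flow of a scalar ODE with Lipschitz vector field preserves order: two trajectories that met
at some time would, by backward uniqueness, have started at the same point. Hence
`S_f(T)(-1) < S_f(T)(1)`, and these two values cannot be simultaneously within distance `< 1` of
`1` and of `-1` respectively. -/

def IsIntegralSolution {E : Type*} [NormedAddCommGroup E] [NormedSpace ℝ E]
    (f : E → ℝ → E) (T : ℝ) (y₀ : E) (y : ℝ → E) : Prop :=
  ContinuousOn y (Icc 0 T) ∧ ∀ t ∈ Icc (0 : ℝ) T, y t = y₀ + ∫ s in (0 : ℝ)..t, f (y s) s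

namespace IsIntegralSolution

variable {E : Type*} [NormedAddCommGroup E] [NormedSpace ℝ E]
  {f : E → ℝ → E} {T : ℝ} {y₀ z₀ : E} {y z : ℝ → E}

theorem apply_zero (hy : IsIntegralSolution f T y₀ y) (hT : 0 ≤ T) : y 0 = y₀ := by
  simpa using hy.2 0 ⟨le_rfl, hT⟩

theorem hasDerivWithinAt [CompleteSpace E] (hy : IsIntegralSolution f T y₀ y)
    (hf : Continuous (Function.uncurry f)) {t : ℝ} (ht : t ∈ Icc 0 T) : HasDerivWithinAt y (f (y t) t) (Icc 0 T) t := by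
  have hfy : ContinuousOn (fun s => f (y s) s) (Icc 0 T) :=
    hf.comp_continuousOn (hy.1.prodMk continuousOn_id)
  have : Fact (t ∈ Icc (0 : ℝ) T) := ⟨ht⟩
  have hint : IntervalIntegrable (fun s => f (y s) s) volume 0 t :=
    (hfy.mono (by rw [uIcc_of_le ht.1]; exact Icc_subset_Icc_right ht.2)).intervalIntegrable
  have hrhs := (integral_hasDerivWithinAt_right (s := Icc 0 T) hint
    (hfy.stronglyMeasurableAtFilter_nhdsWithin measurableSet_Icc t) (hfy t ht)).const_add y₀
  exact hrhs.congr hy.2 (hy.2 t ht)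

theorem eqOn_Icc_of_eq [CompleteSpace E] {K : ℝ≥0} (hf : Continuous (Function.uncurry f))
    (hfl : ∀ t ∈ Icc (0 : ℝ) T, LipschitzWith K (fun w => f w t))
    (hy : IsIntegralSolution f T y₀ y) (hz : IsIntegralSolution f T z₀ z)
    {t₀ : ℝ} (ht₀ : t₀ ∈ Icc 0 T) (heq : y t₀ = z t₀) : EqOn y z (Icc 0 t₀) := by
  have hsub : Icc 0 t₀ ⊆ Icc 0 T := Icc_subset_Icc_right ht₀.2
  have hderiv : ∀ {w₀ : E} {w : ℝ → E}, IsIntegralSolution f T w₀ w →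
      ∀ t ∈ Ioc 0 t₀, HasDerivWithinAt w (f (w t) t) (Iic t) t := fun hw t ht =>
    (hw.hasDerivWithinAt hf (hsub (Ioc_subset_Icc_self ht))).mono_of_mem_nhdsWithin
      (Filter.mem_of_superset (Icc_mem_nhdsLE ht.1) (Icc_subset_Icc_right (ht.2.trans ht₀.2)))
  exact ODE_solution_unique_of_mem_Icc_left (v := fun t w => f w t) (s := fun _ => univ)
    (fun t ht => (hfl t (hsub (Ioc_subset_Icc_self ht))).lipschitzOnWith)
    (hy.1.mono hsub) (hderiv hy) (fun _ _ => mem_univ _)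
    (hz.1.mono hsub) (hderiv hz) (fun _ _ => mem_univ _) heq

theorem apply_lt_apply_of_lt {f : ℝ → ℝ → ℝ} {y₀ z₀ : ℝ} {y z : ℝ → ℝ} {K : ℝ≥0}
    (hf : Continuous (Function.uncurry f))
    (hfl : ∀ t ∈ Icc (0 : ℝ) T, LipschitzWith K (fun w => f w t)) (hT : 0 ≤ T)
    (hy : IsIntegralSolution f T y₀ y) (hz : IsIntegralSolution f T z₀ z) (h₀ : y₀ < z₀) :
    y T < z T := by
  by_contra! hle
  obtain ⟨t₀, ht₀, hcross⟩ : ∃ t₀ ∈ Icc 0 T, z t₀ - y t₀ = 0 :=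
    intermediate_value_Icc' hT (hz.1.sub hy.1)
      ⟨sub_nonpos.2 hle, by rw [Pi.sub_apply, hy.apply_zero hT, hz.apply_zero hT]; linarith⟩
  have h0 := eqOn_Icc_of_eq hf hfl hy hz ht₀ (sub_eq_zero.1 hcross).symm ⟨le_rfl, ht₀.1⟩
  rw [hy.apply_zero hT, hz.apply_zero hT] at h0
  exact h₀.ne h0

end IsIntegralSolution

theorem one_le_abs_one_sub_or_one_le_abs_neg_one_sub {a b : ℝ} (hab : a ≤ b) :
    1 ≤ |1 - a| ∨ 1 ≤ |-1 - b| := by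
  rcases le_or_gt a 0 with ha | ha
  · exact Or.inl (le_abs.2 (Or.inl (by linarith)))
  · exact Or.inr (le_abs.2 (Or.inr (by linarith)))

/-- The map `ξ ↦ −ξ` cannot be approximated by an ODENet, `N = 1`.
Let `D = [−1,1]` and `F(ξ) = −ξ`. For every continuous `f : ℝ × [0,T] → ℝ`, Lipschitz in
`x` uniformly in `t ∈ [0,T]`, the ODENet `S_f(T)` satisfies
`sup_{ξ∈D} |F(ξ) − S_f(T)ξ| ≥ 1`, i.e. for every `ε > 0` there is `ξ ∈ D` with
`|(−ξ) − S_f(T)ξ| > 1 − ε`. -/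
theorem no_uap_reflection (T : ℝ) (hT : 0 < T)
    (f : ℝ → ℝ → ℝ) (hfc : Continuous (Function.uncurry f))
    (K : ℝ≥0) (hfl : ∀ t ∈ Set.Icc (0 : ℝ) T, LipschitzWith K (fun z => f z t))
    (x : ℝ → ℝ → ℝ)
    (hx : ∀ ξ ∈ Set.Icc (-1 : ℝ) 1,
      ContinuousOn (x ξ) (Set.Icc 0 T) ∧
        ∀ t ∈ Set.Icc (0 : ℝ) T, x ξ t = ξ + ∫ s in (0 : ℝ)..t, f (x ξ s) s) :
    ∀ ε > (0 : ℝ), ∃ ξ ∈ Set.Icc (-1 : ℝ) 1, 1 - ε < |(-ξ) - x ξ T| := by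
  intro ε hε
  have hm1 : (-1 : ℝ) ∈ Icc (-1 : ℝ) 1 := ⟨le_rfl, by norm_num⟩
  have hp1 : (1 : ℝ) ∈ Icc (-1 : ℝ) 1 := ⟨by norm_num, le_rfl⟩
  have hordered : x (-1) T < x 1 T :=
    IsIntegralSolution.apply_lt_apply_of_lt hfc hfl hT.le (hx (-1) hm1) (hx 1 hp1) (by norm_num)
  rcases one_le_abs_one_sub_or_one_le_abs_neg_one_sub hordered.le with h | h
  · exact ⟨-1, hm1, by rw [neg_neg]; linarith⟩
  · exact ⟨1, hp1, by linarith⟩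
end
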